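/- Let ψ₁ be a Schwartz function on ℝ with 0 ≤ ψ₁ ≤ 1 and support a compact subset of (0,1), let ψ(y) = ψ₁(y) − ψ₁(−y), and let Ψ(x,ξ₁,ξ₂) = ψ(x)ψ(ξ₂)ψ(ξ₁−ξ₂). Let σ(y) = −πi·sign(y) and σ_BH(x,ξ₁,ξ₂) = σ(ξ₁−ξ₂). Then for all x, t₁, t₂, ξ₁, ξ₂, ν ∈ ℝ: |𝒱_Ψ σ_BH(x, t₁, t₂, ξ₁, ξ₂, ν)| = |ψ̂(ν)| · |∫_ℝ σ(u) e^{2πi u t₁} ψ(u − (ξ₁−ξ₂)) du| · |ψ̂(t₁+t₂)|, where ψ̂(η) = ∫_ℝ ψ(y) e^{−2πi y η} dy. -/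

import Mathlib

/-! The substitution `ξ₁ ↦ ξ₁ + ξ₂` separates the variables of the integrand, so the symbol STFT
is a product of three one-dimensional integrals. Translations contribute only unimodular phases,
and since `ψ` is odd, `ψ̂(-η) = -ψ̂(η)`, which identifies the last factor with `ψ̂(t₁ + t₂)` in
absolute value. -/

open MeasureTheory Complex
open scoped ENNReal NNReal

noncomputable section

/-- `e2pi a = e^{2πi a}`. -/
def e2pi (a : ℝ) : ℂ := Complex.exp (2 * Real.pi * Complex.I * (a : ℂ))

/-- Short-time Fourier transform on `ℝ`: `V_φ f (t, ν)`. -/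
def STFT1 (φ f : ℝ → ℂ) (t ν : ℝ) : ℂ := ∫ y : ℝ, f y * e2pi (-(y * ν)) * φ (y - t)

/-- The Gaussian window `e^{-x²}` on `ℝ`. -/
def gauss1 : ℝ → ℂ := fun x => (Real.exp (-x ^ 2) : ℝ)

/-- `L^p`-type norm (`ℝ≥0∞`-valued) with essential supremum in case `p = ∞`. -/
def eNorm {α : Type*} [MeasurableSpace α] (μ : Measure α) (p : ℝ≥0∞) (F : α → ℝ≥0∞) : ℝ≥0∞ :=
  if p = ∞ then essSup F μ else (∫⁻ a, F a ^ p.toReal ∂μ) ^ (1 / p.toReal)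

/-- Modulation space norm `‖f‖_{M^{p,q}}` on `ℝ` with the Gaussian window. -/
def modNorm1 (p q : ℝ≥0∞) (f : ℝ → ℂ) : ℝ≥0∞ :=
  eNorm volume q fun ν => eNorm volume p fun t => (‖STFT1 gauss1 f t ν‖₊ : ℝ≥0∞)

/-- Fourier transform on `ℝ`. -/
def FT1 (f : ℝ → ℂ) (ξ : ℝ) : ℂ := ∫ y : ℝ, f y * e2pi (-(y * ξ))

/-- Symbol short-time Fourier transform of a symbol on `ℝ³`. -/
def symbSTFT3 (Ψ σ : ℝ × ℝ × ℝ → ℂ) (x t₁ t₂ ξ₁ ξ₂ ν : ℝ) : ℂ :=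
  ∫ X : ℝ × ℝ × ℝ, σ X * Ψ (X.1 - x, X.2.1 - ξ₁, X.2.2 - ξ₂) *
    e2pi (-(X.1 * ν - t₁ * X.2.1 - t₂ * X.2.2))

/-- Symbol short-time Fourier transform of a symbol on `ℝ⁴`. -/
def symbSTFT4 (Ψ σ : ℝ × ℝ × ℝ × ℝ → ℂ) (x t₁ t₂ t₃ ξ₁ ξ₂ ξ₃ ν : ℝ) : ℂ :=
  ∫ X : ℝ × ℝ × ℝ × ℝ, σ X * Ψ (X.1 - x, X.2.1 - ξ₁, X.2.2.1 - ξ₂, X.2.2.2 - ξ₃) *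
    e2pi (-(X.1 * ν - t₁ * X.2.1 - t₂ * X.2.2.1 - t₃ * X.2.2.2))

/-- The bilinear Hilbert transform as an (absolutely convergent) bilinear Fourier
multiplier for Schwartz functions. -/
def BH (f g : ℝ → ℂ) (x : ℝ) : ℂ :=
  ∫ ξ : ℝ × ℝ, (-(Real.pi : ℂ) * Complex.I * (Real.sign (ξ.1 - ξ.2) : ℝ)) *
    FT1 f ξ.1 * FT1 g ξ.2 * e2pi (x * (ξ.1 + ξ.2))

/-- The trilinear Hilbert transform as an (absolutely convergent) trilinear Fourier
multiplier for Schwartz functions. -/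
def TH (f g h : ℝ → ℂ) (x : ℝ) : ℂ :=
  ∫ ξ : ℝ × ℝ × ℝ, ((Real.pi : ℂ) * Complex.I * (Real.sign (ξ.1 - ξ.2.1 - 2 * ξ.2.2) : ℝ)) *
    FT1 f ξ.1 * FT1 g ξ.2.1 * FT1 h ξ.2.2 * e2pi (x * (ξ.1 + ξ.2.1 + ξ.2.2))


lemma e2pi_add (a b : ℝ) : e2pi (a + b) = e2pi a * e2pi b := by
  rw [e2pi, e2pi, e2pi, ← Complex.exp_add]; push_cast; ring_nf

lemma norm_e2pi (a : ℝ) : ‖e2pi a‖ = 1 := by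
  rw [e2pi, show 2 * Real.pi * I * (a : ℂ) = (2 * Real.pi * a : ℝ) * I by push_cast; ring,
    Complex.norm_exp_ofReal_mul_I]

lemma FT1_comp_sub (f : ℝ → ℂ) (c ξ : ℝ) :
    ∫ y : ℝ, f (y - c) * e2pi (-(y * ξ)) = e2pi (-(c * ξ)) * FT1 f ξ := by
  rw [FT1, ← integral_const_mul, ← integral_add_right_eq_self _ c]
  congr 1 with y
  rw [add_sub_cancel_right, show -((y + c) * ξ) = -(c * ξ) + -(y * ξ) by ring, e2pi_add]
  ring

lemma FT1_neg_of_odd {f : ℝ → ℂ} (hf : ∀ y, f (-y) = -f y) (ξ : ℝ) :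
    FT1 f (-ξ) = -FT1 f ξ := by
  rw [FT1, FT1, ← integral_neg_eq_self, ← integral_neg]
  congr 1 with y
  rw [hf, neg_mul_neg]; ring

lemma integral_comp_add_prod (g : ℝ × ℝ → ℂ) :
    ∫ p : ℝ × ℝ, g (p.1 + p.2, p.2) = ∫ p : ℝ × ℝ, g p := by
  have he : MeasurableEmbedding fun p : ℝ × ℝ => (p.1 + p.2, p.2) :=
    MeasurableEmbedding.of_measurable_inverse (by fun_prop)
      (by rw [Set.range_eq_univ.2 fun p => ⟨(p.1 - p.2, p.2), by simp⟩]; exact .univ)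
      (g := fun p : ℝ × ℝ => (p.1 - p.2, p.2)) (by fun_prop) fun p => by simp
  rw [Measure.volume_eq_prod]
  exact (measurePreserving_add_prod volume volume).integral_comp he g

lemma symbSTFT3_product_window_eq (a b c σ : ℝ → ℂ) (x t₁ t₂ ξ₁ ξ₂ ν : ℝ) :
    symbSTFT3 (fun X => a X.1 * b X.2.2 * c (X.2.1 - X.2.2)) (fun X => σ (X.2.1 - X.2.2))
        x t₁ t₂ ξ₁ ξ₂ ν
      = (e2pi (-(x * ν)) * FT1 a ν) *
        (∫ u : ℝ, σ u * e2pi (u * t₁) * c (u - (ξ₁ - ξ₂))) *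
        (e2pi (-(ξ₂ * -(t₁ + t₂))) * FT1 b (-(t₁ + t₂))) := by
  set f₁ : ℝ → ℂ := fun y => a (y - x) * e2pi (-(y * ν))
  set f₂ : ℝ → ℂ := fun u => σ u * e2pi (u * t₁) * c (u - (ξ₁ - ξ₂))
  set f₃ : ℝ → ℂ := fun v => b (v - ξ₂) * e2pi (-(v * -(t₁ + t₂)))
  set g : ℝ × ℝ → ℂ := fun p => f₂ (p.1 - p.2) * f₃ p.2
  have h_split : symbSTFT3 (fun X => a X.1 * b X.2.2 * c (X.2.1 - X.2.2))
      (fun X => σ (X.2.1 - X.2.2)) x t₁ t₂ ξ₁ ξ₂ ν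
        = ∫ X : ℝ × ℝ × ℝ, f₁ X.1 * g X.2 := by
    refine integral_congr_ae (.of_forall fun X => ?_)
    simp only [f₁, g, f₂, f₃]
    rw [show X.2.1 - ξ₁ - (X.2.2 - ξ₂) = X.2.1 - X.2.2 - (ξ₁ - ξ₂) by ring,
      show -(X.1 * ν - t₁ * X.2.1 - t₂ * X.2.2)
        = -(X.1 * ν) + ((X.2.1 - X.2.2) * t₁ + -(X.2.2 * -(t₁ + t₂))) by ring,
      e2pi_add, e2pi_add]
    ring
  have h_shear : ∫ p : ℝ × ℝ, g p = (∫ u, f₂ u) * ∫ v, f₃ v := by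
    rw [← integral_comp_add_prod, Measure.volume_eq_prod, ← integral_prod_mul]
    simp only [g, add_sub_cancel_right]
  rw [h_split, Measure.volume_eq_prod, integral_prod_mul, h_shear,
    ← FT1_comp_sub, ← FT1_comp_sub]
  exact (mul_assoc _ _ _).symm

theorem stmt11_general (ψ₁ : SchwartzMap ℝ ℝ)
    (ψ : ℝ → ℂ) (hψ : ψ = fun y => ((ψ₁ y - ψ₁ (-y) : ℝ) : ℂ))
    (Ψ : ℝ × ℝ × ℝ → ℂ) (hΨ : Ψ = fun X => ψ X.1 * ψ X.2.2 * ψ (X.2.1 - X.2.2))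
    (σ : ℝ → ℂ)
    (σBH : ℝ × ℝ × ℝ → ℂ) (hσBH : σBH = fun X => σ (X.2.1 - X.2.2))
    (x t₁ t₂ ξ₁ ξ₂ ν : ℝ) :
    ‖symbSTFT3 Ψ σBH x t₁ t₂ ξ₁ ξ₂ ν‖
      = ‖∫ y : ℝ, ψ y * e2pi (-(y * ν))‖ *
        ‖∫ u : ℝ, σ u * e2pi (u * t₁) * ψ (u - (ξ₁ - ξ₂))‖ *
        ‖∫ y : ℝ, ψ y * e2pi (-(y * (t₁ + t₂)))‖ := by
  have hodd : ∀ y, ψ (-y) = -ψ y := fun y => by simp only [hψ, neg_neg, ofReal_sub, neg_sub]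
  subst hΨ hσBH
  rw [symbSTFT3_product_window_eq, FT1_neg_of_odd hodd]
  simp only [norm_mul, norm_neg, norm_e2pi, one_mul, FT1]

/-- factorization of the symbol STFT of the bilinear Hilbert transform
symbol `σ_BH(x,ξ₁,ξ₂) = −πi·sign(ξ₁−ξ₂)` with respect to the window
`Ψ(x,ξ₁,ξ₂) = ψ(x)ψ(ξ₂)ψ(ξ₁−ξ₂)`. -/
theorem stmt11 (ψ₁ : SchwartzMap ℝ ℝ)
    (hpos : ∀ y, 0 ≤ ψ₁ y) (hle : ∀ y, ψ₁ y ≤ 1)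
    (hsupp : tsupport (⇑ψ₁) ⊆ Set.Ioo 0 1)
    (ψ : ℝ → ℂ) (hψ : ψ = fun y => ((ψ₁ y - ψ₁ (-y) : ℝ) : ℂ))
    (Ψ : ℝ × ℝ × ℝ → ℂ) (hΨ : Ψ = fun X => ψ X.1 * ψ X.2.2 * ψ (X.2.1 - X.2.2))
    (σ : ℝ → ℂ) (hσ : σ = fun y => -(Real.pi : ℂ) * Complex.I * (Real.sign y : ℝ))
    (σBH : ℝ × ℝ × ℝ → ℂ) (hσBH : σBH = fun X => σ (X.2.1 - X.2.2))
    (x t₁ t₂ ξ₁ ξ₂ ν : ℝ) :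
    ‖symbSTFT3 Ψ σBH x t₁ t₂ ξ₁ ξ₂ ν‖
      = ‖∫ y : ℝ, ψ y * e2pi (-(y * ν))‖ *
        ‖∫ u : ℝ, σ u * e2pi (u * t₁) * ψ (u - (ξ₁ - ξ₂))‖ *
        ‖∫ y : ℝ, ψ y * e2pi (-(y * (t₁ + t₂)))‖ :=
  stmt11_general ψ₁ ψ hψ Ψ hΨ σ σBH hσBH x t₁ t₂ ξ₁ ξ₂ ν

end
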